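/- arXiv:2407.08868 — 2 statements merged into one kernel-verified Lean document; each statement's English description precedes it below -/
import Mathlib

section
/- Let D ⊂ ℝ^{d+1} be a bounded domain with regularity R_D := inf over (x,r) with x ∈ D, r > 0 of |B(x,r) ∩ D| / min{|D|, π^{(d+1)/2} r^{d+1} / Γ((d+1)/2 + 1)} > 0, where |·| denotes Lebesgue measure. Let q be an l₀-Lipschitz continuous function on the closure of D. Then sup_D |q| ≤ max{ 2‖q‖_{L¹(D̄)} / (R_D |D|), 2 l₀ · ( ‖q‖_{L¹(D̄)} · Γ((d+1)/2+1) / (l₀ R_D π^{(d+1)/2}) )^{1/(d+2)} }. -/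
/-!
Let `M = |q x|`. By the Lipschitz bound, `|q| ≥ M / 2` on `B(x, r) ∩ D` as long as
`l₀ r ≤ M / 2`, so `‖q‖₁ ≥ (M / 2) |B(x, r) ∩ D| ≥ (M / 2) R_D min(|D|, |B_r|)`.
Taking `r = M / (2 l₀)` (any large `r` if `l₀ = 0`), the two values of the minimum give the
two terms of the maximum: `|D|` gives the first directly, while `|B_r| ∝ M^{d+1}` gives
`M^{d+2} ≲ ‖q‖₁`, the second.
-/

open Filter MeasureTheory Metric Set

open scoped NNReal

section Geometry

variable {X : Type*} [PseudoMetricSpace X]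

theorem LipschitzOnWith.half_abs_le_abs {f : X → ℝ} {K : ℝ≥0} {s : Set X}
    (hf : LipschitzOnWith K f s) {x y : X} (hx : x ∈ s) (hy : y ∈ s) {r : ℝ}
    (hxy : dist y x ≤ r) (hKr : K * r ≤ |f x| / 2) : |f x| / 2 ≤ |f y| := by
  have hdist : |f x - f y| ≤ |f x| / 2 :=
    calc |f x - f y| = dist (f x) (f y) := (Real.dist_eq _ _).symm
      _ ≤ K * dist x y := hf.dist_le_mul x hx y hy
      _ ≤ K * r := by rw [dist_comm]; gcongr
      _ ≤ |f x| / 2 := hKr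
  linarith [abs_sub_abs_le_abs_sub (f x) (f y)]

variable [MeasurableSpace X]

/-- `R_D`, with `V r` playing the role of the volume of a ball of radius `r`. -/
noncomputable def regularity (μ : Measure X) (V : ℝ → ℝ) (D : Set X) : ℝ :=
  ⨅ p : D × {r : ℝ // 0 < r},
    (μ (closedBall (p.1 : X) (p.2 : ℝ) ∩ D)).toReal / min (μ D).toReal (V p.2)

theorem regularity_mul_min_le {μ : Measure X} {V : ℝ → ℝ} {D : Set X}
    (hV : ∀ r, 0 < r → 0 < V r) (hD : 0 < μ.real D) {x : X} (hx : x ∈ D) {r : ℝ}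
    (hr : 0 < r) :
    regularity μ V D * min (μ.real D) (V r) ≤ μ.real (closedBall x r ∩ D) := by
  have hbdd : BddBelow (range fun p : D × {r : ℝ // 0 < r} =>
      (μ (closedBall (p.1 : X) (p.2 : ℝ) ∩ D)).toReal / min (μ D).toReal (V p.2)) := by
    refine ⟨0, ?_⟩
    rintro _ ⟨p, rfl⟩
    exact div_nonneg ENNReal.toReal_nonneg (le_min hD.le (hV _ p.2.2).le)
  rw [← le_div_iff₀ (lt_min hD (hV r hr))]
  exact ciInf_le hbdd (⟨x, hx⟩, ⟨r, hr⟩)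

theorem half_abs_mul_regularity_le_integral [OpensMeasurableSpace X] {μ : Measure X}
    {V : ℝ → ℝ} {D s : Set X} {f : X → ℝ} {K : ℝ≥0} (hDs : D ⊆ s) (hDm : MeasurableSet D)
    (hDfin : μ D ≠ ⊤)
    (hD : 0 < μ.real D) (hV : ∀ r, 0 < r → 0 < V r)
    (hf : LipschitzOnWith K f s) (hfi : IntegrableOn f s μ)
    {x : X} (hx : x ∈ D) {r : ℝ} (hr : 0 < r) (hKr : K * r ≤ |f x| / 2) :
    |f x| / 2 * (regularity μ V D * min (μ.real D) (V r)) ≤ ∫ y in s, |f y| ∂μ := by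
  have hSs : closedBall x r ∩ D ⊆ s := inter_subset_right.trans hDs
  have hlow : ∀ y ∈ closedBall x r ∩ D, |f x| / 2 ≤ |f y| := fun y hy =>
    hf.half_abs_le_abs (hDs hx) (hSs hy) (mem_closedBall.mp hy.1) hKr
  calc |f x| / 2 * (regularity μ V D * min (μ.real D) (V r))
      ≤ |f x| / 2 * μ.real (closedBall x r ∩ D) := by
        gcongr
        exact regularity_mul_min_le hV hD hx hr
    _ ≤ ∫ y in closedBall x r ∩ D, |f y| ∂μ :=
        setIntegral_ge_of_const_le_real (measurableSet_closedBall.inter hDm)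
          (measure_ne_top_of_subset inter_subset_right hDfin) hlow
          (IntegrableOn.mono_set hfi.abs hSs)
    _ ≤ ∫ y in s, |f y| ∂μ :=
        setIntegral_mono_set hfi.abs (.of_forall fun _ => abs_nonneg _) hSs.eventuallyLE

end Geometry

/-- The volume of a ball of radius `r` in dimension `d + 1`. -/
noncomputable def ballVolume (d : ℕ) (r : ℝ) : ℝ :=
  Real.pi ^ ((d + 1 : ℝ) / 2) * r ^ (d + 1) / Real.Gamma ((d + 1 : ℝ) / 2 + 1)

theorem ballVolume_pos (d : ℕ) {r : ℝ} (hr : 0 < r) : 0 < ballVolume d r := by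
  unfold ballVolume
  have := Real.Gamma_pos_of_pos (by positivity : (0 : ℝ) < (d + 1 : ℝ) / 2 + 1)
  positivity

theorem le_mul_rpow_one_div_of_pow_le {M a K : ℝ} {n : ℕ} (hn : n ≠ 0) (hM : 0 ≤ M)
    (ha : 0 ≤ a) (hK : 0 ≤ K) (h : M ^ n ≤ a ^ n * K) : M ≤ a * K ^ ((1 : ℝ) / n) := by
  have hroot := Real.rpow_le_rpow (by positivity) h (by positivity : (0 : ℝ) ≤ 1 / n)
  rwa [Real.mul_rpow (by positivity) hK, one_div, Real.pow_rpow_inv_natCast hM hn,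
    Real.pow_rpow_inv_natCast ha hn, ← one_div] at hroot

theorem tendsto_ballVolume_atTop (d : ℕ) : Tendsto (ballVolume d) atTop atTop := by
  have hG := Real.Gamma_pos_of_pos (by positivity : (0 : ℝ) < (d + 1 : ℝ) / 2 + 1)
  exact ((tendsto_pow_atTop (Nat.succ_ne_zero d)).const_mul_atTop
    (by positivity : 0 < Real.pi ^ ((d + 1 : ℝ) / 2))).atTop_div_const hG

theorem pow_le_of_half_mul_ballVolume_le {d : ℕ} {M l R I : ℝ} (hl : 0 < l) (hR : 0 < R)
    (h : M / 2 * (R * ballVolume d (M / (2 * l))) ≤ I) :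
    M ^ (d + 2) ≤ (2 * l) ^ (d + 2) *
      (I * Real.Gamma ((d + 1 : ℝ) / 2 + 1) / (l * R * Real.pi ^ ((d + 1 : ℝ) / 2))) := by
  have hG := Real.Gamma_pos_of_pos (by positivity : (0 : ℝ) < (d + 1 : ℝ) / 2 + 1)
  have hP : 0 < Real.pi ^ ((d + 1 : ℝ) / 2) := by positivity
  set G := Real.Gamma ((d + 1 : ℝ) / 2 + 1)
  set P := Real.pi ^ ((d + 1 : ℝ) / 2)
  calc M ^ (d + 2)
      = M / 2 * (R * (P * (M / (2 * l)) ^ (d + 1) / G)) *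
          (2 * (2 * l) ^ (d + 1) * G / (R * P)) := by
        rw [div_pow, mul_pow]
        field_simp
        ring
    _ ≤ I * (2 * (2 * l) ^ (d + 1) * G / (R * P)) := by gcongr; exact h
    _ = (2 * l) ^ (d + 2) * (I * G / (l * R * P)) := by
        field_simp
        ring

theorem le_max_of_forall_half_mul_le {d : ℕ} {M l R V I : ℝ} (hM : 0 ≤ M) (hl : 0 ≤ l)
    (hR : 0 < R) (hV : 0 < V) (hI : 0 ≤ I)
    (h : ∀ r, 0 < r → l * r ≤ M / 2 → M / 2 * (R * min V (ballVolume d r)) ≤ I) :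
    M ≤ max (2 * I / (R * V))
      (2 * l * (I * Real.Gamma ((d + 1 : ℝ) / 2 + 1) / (l * R * Real.pi ^ ((d + 1 : ℝ) / 2))) ^
        ((1 : ℝ) / (d + 2))) := by
  have hG := Real.Gamma_pos_of_pos (by positivity : (0 : ℝ) < (d + 1 : ℝ) / 2 + 1)
  have hP : 0 < Real.pi ^ ((d + 1 : ℝ) / 2) := by positivity
  have hsaturated : M / 2 * (R * V) ≤ I → M ≤ 2 * I / (R * V) := fun h => by
    rw [le_div_iff₀ (by positivity)]
    linarith
  rcases hM.eq_or_lt with rfl | hMpos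
  · exact le_max_of_le_left (by positivity)
  rcases hl.eq_or_lt with rfl | hlpos
  · obtain ⟨r, hrV, hr⟩ :=
      (((tendsto_ballVolume_atTop d).eventually_ge_atTop V).and (eventually_gt_atTop 0)).exists
    refine le_max_of_le_left (hsaturated ?_)
    simpa only [min_eq_left hrV] using h r hr (by linarith)
  have hr : 0 < M / (2 * l) := by positivity
  have hball := h _ hr (by field_simp; rfl)
  rcases min_cases V (ballVolume d (M / (2 * l))) with ⟨hmin, _⟩ | ⟨hmin, _⟩
  · exact le_max_of_le_left (hsaturated (hmin ▸ hball))
  · refine le_max_of_le_right ?_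
    have := le_mul_rpow_one_div_of_pow_le (n := d + 2) (by omega) hM (by positivity)
      (by positivity) (pow_le_of_half_mul_ballVolume_le hlpos hR (hmin ▸ hball))
    rwa [Nat.cast_add, Nat.cast_two] at this

theorem stmt_0_general {d : ℕ} (D : Set (EuclideanSpace ℝ (Fin (d + 1))))
    (hD : Bornology.IsBounded D) (hDopen : IsOpen D)
    (l₀ : ℝ) (hl₀ : 0 ≤ l₀)
    (q : EuclideanSpace ℝ (Fin (d + 1)) → ℝ)
    (hq : LipschitzOnWith (Real.toNNReal l₀) q (closure D))
    (RD : ℝ)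
    (hRD : RD = ⨅ p : D × {r : ℝ // 0 < r},
      (volume (closedBall (p.1 : EuclideanSpace ℝ (Fin (d + 1))) (p.2 : ℝ) ∩ D)).toReal /
        min (volume D).toReal
          (Real.pi ^ ((d + 1 : ℝ) / 2) * (p.2 : ℝ) ^ (d + 1) /
            Real.Gamma ((d + 1 : ℝ) / 2 + 1)))
    (hRDpos : 0 < RD) :
    ∀ x ∈ D, |q x| ≤
      max (2 * (∫ y in closure D, |q y|) / (RD * (volume D).toReal))
        (2 * l₀ *
          ((∫ y in closure D, |q y|) * Real.Gamma ((d + 1 : ℝ) / 2 + 1) /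
              (l₀ * RD * Real.pi ^ ((d + 1 : ℝ) / 2))) ^ ((1 : ℝ) / (d + 2))) := by
  intro x hx
  have hvol : 0 < volume.real D :=
    ENNReal.toReal_pos (hDopen.measure_pos volume ⟨x, hx⟩).ne' hD.measure_lt_top.ne
  have hqi : IntegrableOn q (closure D) :=
    hq.continuousOn.integrableOn_compact hD.isCompact_closure
  refine le_max_of_forall_half_mul_le (abs_nonneg _) hl₀ hRDpos hvol
    (integral_nonneg fun _ => abs_nonneg _) fun r hr hlr => ?_
  rw [show RD = regularity volume (ballVolume d) D from hRD]
  exact half_abs_mul_regularity_le_integral subset_closure hDopen.measurableSet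
    hD.measure_lt_top.ne hvol (fun _ => ballVolume_pos d) hq hqi hx hr
    (by rwa [Real.coe_toNNReal l₀ hl₀])

/-- Lipschitz-bound lemma: sup bound from the L¹ norm for a Lipschitz function on a
bounded domain with positive regularity. -/
theorem stmt_0 {d : ℕ} (D : Set (EuclideanSpace ℝ (Fin (d + 1))))
    (hD : Bornology.IsBounded D) (hDopen : IsOpen D) (hDne : D.Nonempty)
    (l₀ : ℝ) (hl₀ : 0 ≤ l₀)
    (q : EuclideanSpace ℝ (Fin (d + 1)) → ℝ)
    (hq : LipschitzOnWith (Real.toNNReal l₀) q (closure D))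
    (RD : ℝ)
    (hRD : RD = ⨅ p : D × {r : ℝ // 0 < r},
      (volume (closedBall (p.1 : EuclideanSpace ℝ (Fin (d + 1))) (p.2 : ℝ) ∩ D)).toReal /
        min (volume D).toReal
          (Real.pi ^ ((d + 1 : ℝ) / 2) * (p.2 : ℝ) ^ (d + 1) /
            Real.Gamma ((d + 1 : ℝ) / 2 + 1)))
    (hRDpos : 0 < RD) :
    ∀ x ∈ D, |q x| ≤
      max (2 * (∫ y in closure D, |q y|) / (RD * (volume D).toReal))
        (2 * l₀ *
          ((∫ y in closure D, |q y|) * Real.Gamma ((d + 1 : ℝ) / 2 + 1) /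
              (l₀ * RD * Real.pi ^ ((d + 1 : ℝ) / 2))) ^ ((1 : ℝ) / (d + 2))) :=
  stmt_0_general D hD hDopen l₀ hl₀ q hq RD hRD hRDpos
end

section
/- From mean-value bounds to sup bounds for PINNs: let D ⊂ ℝ^{d+1} be bounded with positive regularity R_D, and Σ ⊂ ∂D a d-dimensional boundary portion with positive regularity R_Σ (with respect to d-dimensional Hausdorff measure). Suppose F, W_F (the PDE residual of F), and u are all (l/2)-Lipschitz on D, E_Y[|F(Y) − ũ(Y)|] < δ₁ for Y uniform on Σ, and E_X[|W_F(X)|] < δ₂ for X uniform on D. Then sup_Σ |F − ũ| ≤ δ̃₁ and sup_D |W_F| ≤ δ̃₂, where δ̃₁ = max{2δ₁/R_Σ, 2l(δ₁|Σ|Γ(d/2+1)/(l R_Σ π^{d/2}))^{1/(d+1)}} and δ̃₂ = max{2δ₂/R_D, 2l(δ₂|D|Γ((d+1)/2+1)/(l R_D π^{(d+1)/2}))^{1/(d+2)}}. -/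
open MeasureTheory Metric Set
open scoped MeasureTheory

/-! If `g` is `l`-Lipschitz and `|g y| = M`, then `|g| ≥ M / 2` on the ball of radius
`M / (2 l)` around `y`. Regularity bounds the measure of that ball (within `S`) from below by
`K · min(|S|, c r^n / Γ)`, so the mean of `|g|` over `S` is at least `M / 2` times this.
Comparing with the assumed bound `δ` on the mean, either `min` branch yields one of the two
terms of the maximum. -/

lemma le_max_of_half_mul_min_lt {M K c Γ l A δ : ℝ} {n : ℕ} (hM : 0 ≤ M) (hK : 0 < K)
    (hc : 0 < c) (hΓ : 0 < Γ) (hl : 0 < l) (hA : 0 < A)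
    (h : M / 2 * (K * min A (c * (M / (2 * l)) ^ n / Γ)) < δ * A) :
    M ≤ max (2 * δ / K) (2 * l * (δ * A * Γ / (l * K * c)) ^ ((1 : ℝ) / (n + 1))) := by
  rcases le_total A (c * (M / (2 * l)) ^ n / Γ) with hmin | hmin
  · rw [min_eq_left hmin] at h
    refine le_max_of_le_left ?_
    rw [le_div_iff₀ hK]
    nlinarith
  · rw [min_eq_right hmin] at h
    refine le_max_of_le_right ?_
    set t := (M / (2 * l)) ^ n
    have hδ : 0 < δ :=
      pos_of_mul_pos_left ((by positivity : (0:ℝ) ≤ M / 2 * (K * (c * t / Γ))).trans_lt h) hA.le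
    have hpow : (M / (2 * l)) ^ ((n : ℝ) + 1) ≤ δ * A * Γ / (l * K * c) := by
      rw [← Nat.cast_add_one, Real.rpow_natCast, pow_succ, le_div_iff₀ (by positivity)]
      have := mul_lt_mul_of_pos_right h hΓ
      field_simp at this ⊢
      linarith
    have := (Real.le_rpow_inv_iff_of_pos (by positivity) (by positivity) (by positivity)).2 hpow
    rw [one_div]
    calc M = 2 * l * (M / (2 * l)) := by field_simp
      _ ≤ _ := by gcongr

lemma LipschitzOnWith.abs_half_le_of_dist_le {E : Type*} [PseudoMetricSpace E] {T : Set E}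
    {g : E → ℝ} {l : ℝ} (hl : 0 < l) (hg : LipschitzOnWith l.toNNReal g T) {y z : E}
    (hy : y ∈ T) (hz : z ∈ T) (hzy : dist z y ≤ |g y| / (2 * l)) : |g y| / 2 ≤ |g z| := by
  have hlip : |g z - g y| ≤ l * dist z y := by
    simpa [Real.dist_eq, Real.coe_toNNReal _ hl.le] using hg.dist_le_mul z hz y hy
  have : l * dist z y ≤ |g y| / 2 := by
    calc l * dist z y ≤ l * (|g y| / (2 * l)) := by gcongr
      _ = |g y| / 2 := by field_simp
  have := abs_sub_abs_le_abs_sub (g y) (g z)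
  rw [abs_sub_comm] at this
  linarith

section

variable {E : Type*} [MetricSpace E] [MeasurableSpace E] [BorelSpace E]
  {μ : Measure E} {S T : Set E} {g : E → ℝ}

-- Unlike `ContinuousOn.integrableOn_of_subset_isCompact`, `S` need not be measurable
-- (e.g. an arbitrary subset of a boundary, under a Hausdorff measure).
lemma ContinuousOn.integrableOn_of_subset_isCompact' (hg : ContinuousOn g T) (hT : IsCompact T)
    (hST : S ⊆ T) (hμS : μ S ≠ ⊤) : IntegrableOn g S μ := by
  have : IsFiniteMeasure (μ.restrict S) := ⟨by simpa [lt_top_iff_ne_top] using hμS⟩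
  have := hg.integrableOn_compact (μ := μ.restrict S) hT
  rwa [IntegrableOn, Measure.restrict_restrict hT.measurableSet,
    inter_eq_self_of_subset_right hST] at this

lemma LipschitzOnWith.mul_measure_ball_le_setIntegral_abs {l : ℝ} (hl : 0 < l)
    (hg : LipschitzOnWith l.toNNReal g T) (hT : IsCompact T) (hST : S ⊆ T) (hμS : μ S ≠ ⊤)
    {y : E} (hy : y ∈ T) :
    |g y| / 2 * (μ (closedBall y (|g y| / (2 * l)) ∩ S)).toReal ≤ ∫ z in S, |g z| ∂μ := by
  set B := closedBall y (|g y| / (2 * l))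
  have hB : MeasurableSet B := measurableSet_closedBall
  have hle : ∀ᵐ z ∂μ.restrict S, B.indicator (fun _ => |g y| / 2) z ≤ |g z| := by
    filter_upwards [ae_restrict_of_ae_restrict_of_subset hST (ae_restrict_mem hT.measurableSet)]
      with z hz
    by_cases hzB : z ∈ B
    · rw [indicator_of_mem hzB]
      exact hg.abs_half_le_of_dist_le hl hy hz (mem_closedBall.1 hzB)
    · rw [indicator_of_notMem hzB]
      positivity
  calc |g y| / 2 * (μ (B ∩ S)).toReal
      = ∫ z in S, B.indicator (fun _ => |g y| / 2) z ∂μ := by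
        rw [integral_indicator_const _ hB, measureReal_restrict_apply hB, smul_eq_mul, mul_comm]
        rfl
    _ ≤ ∫ z in S, |g z| ∂μ := integral_mono_ae ((integrableOn_const hμS).indicator hB)
        (hg.continuousOn.abs.integrableOn_of_subset_isCompact' hT hST hμS) hle

lemma LipschitzOnWith.abs_le_of_setIntegral_abs_lt {l K c Γ δ : ℝ} {n : ℕ} (hl : 0 < l)
    (hg : LipschitzOnWith l.toNNReal g T) (hT : IsCompact T) (hST : S ⊆ T)
    (hK : 0 < K) (hc : 0 < c) (hΓ : 0 < Γ) {y : E} (hy : y ∈ S)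
    (hreg : ∀ r > (0 : ℝ),
      K * min (μ S).toReal (c * r ^ n / Γ) ≤ (μ (closedBall y r ∩ S)).toReal)
    (hmean : ∫ z in S, |g z| ∂μ < δ * (μ S).toReal) :
    |g y| ≤ max (2 * δ / K)
      (2 * l * (δ * (μ S).toReal * Γ / (l * K * c)) ^ ((1 : ℝ) / (n + 1))) := by
  have hδA : 0 < δ * (μ S).toReal :=
    (integral_nonneg fun z => abs_nonneg (g z)).trans_lt hmean
  have hA : 0 < (μ S).toReal :=
    ENNReal.toReal_nonneg.lt_of_ne fun h => by simp [← h] at hδA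
  have hμS : μ S ≠ ⊤ := fun h => by simp [h] at hA
  rcases (abs_nonneg (g y)).eq_or_lt with hy0 | hypos
  · rw [← hy0]
    exact le_max_of_le_left (div_nonneg (by linarith [pos_of_mul_pos_left hδA hA.le]) hK.le)
  refine le_max_of_half_mul_min_lt (abs_nonneg _) hK hc hΓ hl hA ?_
  calc |g y| / 2 * (K * min (μ S).toReal (c * (|g y| / (2 * l)) ^ n / Γ))
      ≤ |g y| / 2 * (μ (closedBall y (|g y| / (2 * l)) ∩ S)).toReal := by
        gcongr
        exact hreg _ (by positivity)
    _ ≤ ∫ z in S, |g z| ∂μ := hg.mul_measure_ball_le_setIntegral_abs hl hT hST hμS (hST hy)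
    _ < δ * (μ S).toReal := hmean

end

theorem stmt_13_general {d : ℕ} (D : Set (EuclideanSpace ℝ (Fin (d + 1))))
    (hD : Bornology.IsBounded D)
    (Ss : Set (EuclideanSpace ℝ (Fin (d + 1))))
    (hSs : Ss ⊆ frontier D)
    (l : ℝ) (hl : 0 < l)
    (F WF ut : EuclideanSpace ℝ (Fin (d + 1)) → ℝ)
    (hF : LipschitzOnWith (Real.toNNReal (l / 2)) F (closure D))
    (hWF : LipschitzOnWith (Real.toNNReal (l / 2)) WF (closure D))
    (hut : LipschitzOnWith (Real.toNNReal (l / 2)) ut (closure D))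
    (RS RD : ℝ) (hRSpos : 0 < RS) (hRDpos : 0 < RD)
    -- regularity of Σ with respect to d-dimensional Hausdorff measure
    (hRS : ∀ x ∈ Ss, ∀ r > (0 : ℝ),
      RS * min ((μH[(d : ℝ)] Ss).toReal)
          (Real.pi ^ ((d : ℝ) / 2) * r ^ d / Real.Gamma ((d : ℝ) / 2 + 1)) ≤
        (μH[(d : ℝ)] (closedBall x r ∩ Ss)).toReal)
    -- regularity of D with respect to (d+1)-dimensional Lebesgue measure
    (hRD : ∀ x ∈ D, ∀ r > (0 : ℝ),
      RD * min ((volume D).toReal)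
          (Real.pi ^ ((d + 1 : ℝ) / 2) * r ^ (d + 1) /
            Real.Gamma ((d + 1 : ℝ) / 2 + 1)) ≤
        (volume (closedBall x r ∩ D)).toReal)
    (δ₁ δ₂ : ℝ)
    -- E_Y[|F(Y) − ũ(Y)|] < δ₁ for Y uniform on Σ
    (hmean1 : (∫ y in Ss, |F y - ut y| ∂μH[(d : ℝ)]) < δ₁ * (μH[(d : ℝ)] Ss).toReal)
    -- E_X[|W_F(X)|] < δ₂ for X uniform on D
    (hmean2 : (∫ x in D, |WF x|) < δ₂ * (volume D).toReal) :
    (∀ y ∈ Ss, |F y - ut y| ≤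
      max (2 * δ₁ / RS)
        (2 * l * (δ₁ * (μH[(d : ℝ)] Ss).toReal * Real.Gamma ((d : ℝ) / 2 + 1) /
            (l * RS * Real.pi ^ ((d : ℝ) / 2))) ^ ((1 : ℝ) / (d + 1)))) ∧
    (∀ x ∈ D, |WF x| ≤
      max (2 * δ₂ / RD)
        (2 * l * (δ₂ * (volume D).toReal * Real.Gamma ((d + 1 : ℝ) / 2 + 1) /
            (l * RD * Real.pi ^ ((d + 1 : ℝ) / 2))) ^ ((1 : ℝ) / (d + 2)))) := by
  have hT : IsCompact (closure D) := hD.isCompact_closure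
  have hFut : LipschitzOnWith l.toNNReal (fun z => F z - ut z) (closure D) := by
    simpa only [← Real.toNNReal_add (half_pos hl).le (half_pos hl).le, add_halves]
      using hF.sub hut
  have hWF' : LipschitzOnWith l.toNNReal WF (closure D) :=
    hWF.weaken (Real.toNNReal_le_toNNReal (half_le_self hl.le))
  refine ⟨fun y hy => ?_, fun x hx => ?_⟩
  · exact hFut.abs_le_of_setIntegral_abs_lt hl hT (hSs.trans frontier_subset_closure) hRSpos
      (by positivity) (Real.Gamma_pos_of_pos (by positivity)) hy (hRS y hy) hmean1
  · convert hWF'.abs_le_of_setIntegral_abs_lt hl hT subset_closure hRDpos (by positivity)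
      (Real.Gamma_pos_of_pos (by positivity)) hx (hRD x hx) hmean2 using 5
    push_cast
    ring

/-- From mean-value bounds under uniform sampling to sup bounds, for the boundary data
mismatch on Σ (with d-dimensional Hausdorff measure) and the PDE residual on D
(with Lebesgue measure), for (l/2)-Lipschitz F, W_F, u, ũ. -/
theorem stmt_13 {d : ℕ} (D : Set (EuclideanSpace ℝ (Fin (d + 1))))
    (hD : Bornology.IsBounded D) (hDopen : IsOpen D) (hDne : D.Nonempty)
    (Ss : Set (EuclideanSpace ℝ (Fin (d + 1))))
    (hSs : Ss ⊆ frontier D) (hSsne : Ss.Nonempty)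
    (l : ℝ) (hl : 0 < l)
    (F WF u ut : EuclideanSpace ℝ (Fin (d + 1)) → ℝ)
    (hF : LipschitzOnWith (Real.toNNReal (l / 2)) F (closure D))
    (hWF : LipschitzOnWith (Real.toNNReal (l / 2)) WF (closure D))
    (hu : LipschitzOnWith (Real.toNNReal (l / 2)) u (closure D))
    (hut : LipschitzOnWith (Real.toNNReal (l / 2)) ut (closure D))
    (RS RD : ℝ) (hRSpos : 0 < RS) (hRDpos : 0 < RD)
    -- regularity of Σ with respect to d-dimensional Hausdorff measure
    (hRS : ∀ x ∈ Ss, ∀ r > (0 : ℝ),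
      RS * min ((μH[(d : ℝ)] Ss).toReal)
          (Real.pi ^ ((d : ℝ) / 2) * r ^ d / Real.Gamma ((d : ℝ) / 2 + 1)) ≤
        (μH[(d : ℝ)] (closedBall x r ∩ Ss)).toReal)
    -- regularity of D with respect to (d+1)-dimensional Lebesgue measure
    (hRD : ∀ x ∈ D, ∀ r > (0 : ℝ),
      RD * min ((volume D).toReal)
          (Real.pi ^ ((d + 1 : ℝ) / 2) * r ^ (d + 1) /
            Real.Gamma ((d + 1 : ℝ) / 2 + 1)) ≤
        (volume (closedBall x r ∩ D)).toReal)
    (δ₁ δ₂ : ℝ) (hδ₁pos : 0 < δ₁) (hδ₂pos : 0 < δ₂)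
    -- E_Y[|F(Y) − ũ(Y)|] < δ₁ for Y uniform on Σ
    (hmean1 : (∫ y in Ss, |F y - ut y| ∂μH[(d : ℝ)]) < δ₁ * (μH[(d : ℝ)] Ss).toReal)
    -- E_X[|W_F(X)|] < δ₂ for X uniform on D
    (hmean2 : (∫ x in D, |WF x|) < δ₂ * (volume D).toReal) :
    (∀ y ∈ Ss, |F y - ut y| ≤
      max (2 * δ₁ / RS)
        (2 * l * (δ₁ * (μH[(d : ℝ)] Ss).toReal * Real.Gamma ((d : ℝ) / 2 + 1) /
            (l * RS * Real.pi ^ ((d : ℝ) / 2))) ^ ((1 : ℝ) / (d + 1)))) ∧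
    (∀ x ∈ D, |WF x| ≤
      max (2 * δ₂ / RD)
        (2 * l * (δ₂ * (volume D).toReal * Real.Gamma ((d + 1 : ℝ) / 2 + 1) /
            (l * RD * Real.pi ^ ((d + 1 : ℝ) / 2))) ^ ((1 : ℝ) / (d + 2)))) :=
  stmt_13_general D hD Ss hSs l hl F WF ut hF hWF hut RS RD hRSpos hRDpos hRS hRD δ₁ δ₂ hmean1
    hmean2
end
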